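/- arXiv:2412.20074 — 3 statements merged into one kernel-verified Lean document; each statement's English description precedes it below -/
import Mathlib

section
/- Let D, Δ ∈ ℝ with 0 ≤ D ≤ Δ, let y ∈ ℝ with y ∈ {0, 1}, let K ≥ 0 and z : Fin K → ℝ with z k ∈ {0, 1} for every k. Then the set { t ∈ ℝ : 0 ≤ t and D − Δ·(1 − y + ∑_{k} z k) ≤ t } has a least element, and this least element equals D · y · ∏_{k} (1 − z k). -/
/-! With binary `y` and `z`, either `y = 1` and every `z k = 0`, so the big-M term vanishes and the
bound is `D` itself, or `1 - y + ∑ k, z k ≥ 1`, so `Δ ≥ D` makes the bound nonpositive while the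
product vanishes. The least element of the set is `max 0 (D - Δ(1 - y + ∑ k, z k))` in both cases. -/

open Finset

theorem isLeast_setOf_nonneg_and_le {α : Type*} [LinearOrder α] [Zero α] (a : α) :
    IsLeast {t | 0 ≤ t ∧ a ≤ t} (max 0 a) := by
  simpa only [Set.Ici, max_le_iff] using isLeast_Ici (a := max 0 a)

theorem max_zero_sub_mul_eq_zero {D Δ M : ℝ} (hD : 0 ≤ D) (hDΔ : D ≤ Δ) (hM : 1 ≤ M) :
    max 0 (D - Δ * M) = 0 := by
  have : Δ ≤ Δ * M := le_mul_of_one_le_right (hD.trans hDΔ) hM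
  exact max_eq_left (by linarith)

theorem one_le_sum_of_binary {ι : Type*} [Fintype ι] {z : ι → ℝ}
    (hz : ∀ k, z k = 0 ∨ z k = 1) {k₀ : ι} (hk₀ : z k₀ = 1) : 1 ≤ ∑ k, z k := by
  have hnonneg : ∀ k ∈ univ, 0 ≤ z k := fun k _ => by rcases hz k with h | h <;> simp [h]
  exact hk₀ ▸ single_le_sum hnonneg (mem_univ k₀)

theorem bigM_cases_of_binary {ι : Type*} [Fintype ι] {y : ℝ} (hy : y = 0 ∨ y = 1) {z : ι → ℝ}
    (hz : ∀ k, z k = 0 ∨ z k = 1) :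
    (1 - y + ∑ k, z k = 0 ∧ y * ∏ k, (1 - z k) = 1) ∨
      (1 ≤ 1 - y + ∑ k, z k ∧ y * ∏ k, (1 - z k) = 0) := by
  have hsum_nonneg : 0 ≤ ∑ k, z k :=
    sum_nonneg fun k _ => by rcases hz k with h | h <;> simp [h]
  rcases hy with rfl | rfl
  · exact Or.inr ⟨by linarith, zero_mul _⟩
  by_cases hall : ∀ k, z k = 0
  · left
    simp [hall]
  · right
    obtain ⟨k₀, hk₀⟩ := not_forall.mp hall
    have hk₀ : z k₀ = 1 := (hz k₀).resolve_left hk₀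
    refine ⟨by linarith [one_le_sum_of_binary hz hk₀], ?_⟩
    rw [one_mul]
    exact prod_eq_zero (mem_univ k₀) (by rw [hk₀, sub_self])

theorem collocation_linearization_scalar_general
    (D Δ : ℝ) (hD : 0 ≤ D) (hDΔ : D ≤ Δ)
    (y : ℝ) (hy : y = 0 ∨ y = 1)
    (K : ℕ) (z : Fin K → ℝ) (hz : ∀ k, z k = 0 ∨ z k = 1) :
    IsLeast {t : ℝ | 0 ≤ t ∧ D - Δ * (1 - y + ∑ k, z k) ≤ t}
      (D * y * ∏ k, (1 - z k)) := by
  suffices h : D * y * ∏ k, (1 - z k) = max 0 (D - Δ * (1 - y + ∑ k, z k)) from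
    h ▸ isLeast_setOf_nonneg_and_le _
  rw [mul_assoc]
  rcases bigM_cases_of_binary hy hz with ⟨hM, hw⟩ | ⟨hM, hw⟩
  · rw [hM, hw, mul_zero, sub_zero, mul_one, max_eq_right hD]
  · rw [hw, mul_zero, max_zero_sub_mul_eq_zero hD hDΔ hM]

/-- Scalar core of the MISOCO reformulation of the collocation model: the set
`{t : 0 ≤ t ∧ D - Δ(1 - y + ∑ k, z k) ≤ t}` has a least element, equal to
`D * y * ∏ k, (1 - z k)`. -/
theorem collocation_linearization_scalar
    (D Δ : ℝ) (hD : 0 ≤ D) (hDΔ : D ≤ Δ)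
    (y : ℝ) (hy : y = 0 ∨ y = 1)
    (K : ℕ) (hK : 0 ≤ K) (z : Fin K → ℝ) (hz : ∀ k, z k = 0 ∨ z k = 1) :
    IsLeast {t : ℝ | 0 ≤ t ∧ D - Δ * (1 - y + ∑ k, z k) ≤ t}
      (D * y * ∏ k, (1 - z k)) :=
  collocation_linearization_scalar_general D Δ hD hDΔ y hy K z hz
end

section
/- Let d ≥ 1 and write ‖v‖₁ = ∑_{k ∈ Fin d} |v k| for v : Fin d → ℝ. Let P, P' ⊆ (Fin d → ℝ), let Δ ∈ ℝ satisfy ‖q − q'‖₁ ≤ Δ for all q ∈ P and q' ∈ P', let a ∈ P, a' ∈ P', and let z ∈ ℝ with z ∈ {0, 1}. Then the following three conditions are equivalent: (i) ‖a − a'‖₁ · z ≤ 0; (ii) ‖a − a'‖₁ ≤ Δ · (1 − z); (iii) z = 1 → a = a'. -/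
/-! For `z = 0` both constraints are vacuous, the first trivially and the second because `Δ`
bounds every `ℓ₁`-distance between the regions; for `z = 1` both say `‖a - a'‖₁ ≤ 0`, i.e.
`a = a'`. -/

section BinaryIndicator

variable {R : Type*} [Ring R] [Preorder R] [Nontrivial R] {x Δ z : R}

theorem mul_nonpos_iff_of_eq_zero_or_eq_one (hz : z = 0 ∨ z = 1) :
    x * z ≤ 0 ↔ (z = 1 → x ≤ 0) := by
  rcases hz with rfl | rfl <;> simp

theorem le_mul_one_sub_iff_of_eq_zero_or_eq_one (hxΔ : x ≤ Δ) (hz : z = 0 ∨ z = 1) :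
    x ≤ Δ * (1 - z) ↔ (z = 1 → x ≤ 0) := by
  rcases hz with rfl | rfl
  · simpa using hxΔ
  · simp

end BinaryIndicator

theorem sum_abs_sub_nonpos_iff {ι α : Type*} [Fintype ι] [AddCommGroup α] [LinearOrder α]
    [IsOrderedAddMonoid α] {a b : ι → α} :
    ∑ i, |a i - b i| ≤ 0 ↔ a = b := by
  have hnonneg : ∀ i ∈ Finset.univ, 0 ≤ |a i - b i| := fun i _ => abs_nonneg _
  rw [(Finset.sum_nonneg hnonneg).ge_iff_eq', Finset.sum_eq_zero_iff_of_nonneg hnonneg, funext_iff]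
  simp only [Finset.mem_univ, true_implies, abs_eq_zero, sub_eq_zero]

theorem collocation_bigM_equivalence_general
    (d : ℕ)
    (P P' : Set (Fin d → ℝ)) (Δ : ℝ)
    (hΔ : ∀ q ∈ P, ∀ q' ∈ P', ∑ k, |q k - q' k| ≤ Δ)
    (a : Fin d → ℝ) (ha : a ∈ P) (a' : Fin d → ℝ) (ha' : a' ∈ P')
    (z : ℝ) (hz : z = 0 ∨ z = 1) :
    ((∑ k, |a k - a' k|) * z ≤ 0 ↔ ∑ k, |a k - a' k| ≤ Δ * (1 - z)) ∧
      ((∑ k, |a k - a' k| ≤ Δ * (1 - z)) ↔ (z = 1 → a = a')) := by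
  have hnonlinear := mul_nonpos_iff_of_eq_zero_or_eq_one (x := ∑ k, |a k - a' k|) hz
  have hbigM := le_mul_one_sub_iff_of_eq_zero_or_eq_one (hΔ a ha a' ha') hz
  rw [sum_abs_sub_nonpos_iff] at hnonlinear hbigM
  exact ⟨hnonlinear.trans hbigM.symm, hbigM⟩

/-- Equivalence between the nonlinear collocation constraint
`‖a - a'‖₁ · z ≤ 0`, its big-M linearization `‖a - a'‖₁ ≤ Δ (1 - z)`, and the
logical condition `z = 1 → a = a'`. -/
theorem collocation_bigM_equivalence
    (d : ℕ) (hd : 1 ≤ d)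
    (P P' : Set (Fin d → ℝ)) (Δ : ℝ)
    (hΔ : ∀ q ∈ P, ∀ q' ∈ P', ∑ k, |q k - q' k| ≤ Δ)
    (a : Fin d → ℝ) (ha : a ∈ P) (a' : Fin d → ℝ) (ha' : a' ∈ P')
    (z : ℝ) (hz : z = 0 ∨ z = 1) :
    ((∑ k, |a k - a' k|) * z ≤ 0 ↔ ∑ k, |a k - a' k| ≤ Δ * (1 - z)) ∧
      ((∑ k, |a k - a' k| ≤ Δ * (1 - z)) ↔ (z = 1 → a = a')) :=
  collocation_bigM_equivalence_general d P P' Δ hΔ a ha a' ha' z hz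
end

section
/- Fix d, n, p ≥ 1 and let E = EuclideanSpace ℝ (Fin d). Let P : Fin n → Set E with each P i nonempty, let X ⊆ E be nonempty, let Δ¹ : Fin n → ℝ satisfy ‖a − x‖ ≤ Δ¹ i for all a ∈ P i and x ∈ X, and let Δ² : Fin n → Fin n → ℝ satisfy ∑_k |a k − a' k| ≤ Δ² i i' for all a ∈ P i and a' ∈ P i'. Write [·] for the 0/1 indicator of a Boolean. Define V₁ as the infimum, over all a : Fin n → E with a i ∈ P i, x : Fin p → E with x j ∈ X, assignments σ : Fin n → Fin p, and z : Fin n → Fin n → Bool satisfying (z i i' = true → a i = a i') for all i' < i, of ∑_{i} ‖a i − x (σ i)‖ · ∏_{i' < i} (1 − [z i i']). Define V₂ as the infimum, over all (a, x, σ, z) ranging over the same index and membership conditions together with dd : Fin n → Fin p → ℝ satisfying, for all i, j: dd i j ≥ 0 and dd i j ≥ ‖a i − x j‖ − Δ¹ i · (1 − [σ i = j] + ∑_{i' < i} [z i i']), and satisfying ∑_k |a i k − a i' k| ≤ Δ² i i' · (1 − [z i i']) for all i' < i, of ∑_{i, j} dd i j. Then V₁ = V₂. -/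
/-!
A feasible point of the product formulation becomes feasible for the reformulation with the same
value by taking `dd i j` to be the positive part of its lower bound, and every feasible point of
the reformulation dominates the product objective of its own `(a, x, σ, z)`. Everything happens
row by row: if region `i` is collocated with an earlier one, its product is `0` and the big-M
slack is at least `1`, so `Δ¹ i` switches every lower bound off; otherwise the product is `1` and
only the lower bound at `j = σ i` survives, as `dd i (σ i) ≥ ‖a i - x (σ i)‖`. The ℓ₁ constraint
with bound `Δ²` is exactly the implication `z i i' = true → a i = a i'`.
-/

noncomputable def ind (b : Bool) : ℝ := if b then 1 else 0

open Finset

lemma sum_ind_and_prod_one_sub_ind_cases {κ : Type*} (s : Finset κ) (f : κ → Bool) :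
    (∑ k ∈ s, ind (f k) = 0 ∧ ∏ k ∈ s, (1 - ind (f k)) = 1) ∨
      (1 ≤ ∑ k ∈ s, ind (f k) ∧ ∏ k ∈ s, (1 - ind (f k)) = 0) := by
  by_cases h : ∃ k ∈ s, f k = true
  · obtain ⟨k, hk, hfk⟩ := h
    have hind : ind (f k) = 1 := by simp [ind, hfk]
    refine Or.inr ⟨?_, prod_eq_zero hk (by rw [hind, sub_self])⟩
    calc (1 : ℝ) = ind (f k) := hind.symm
      _ ≤ ∑ k ∈ s, ind (f k) :=
        single_le_sum (fun k _ => show 0 ≤ ind (f k) by unfold ind; split <;> norm_num) hk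
  · push Not at h
    have hind : ∀ k ∈ s, ind (f k) = 0 := fun k hk => by simp [ind, h k hk]
    exact Or.inl ⟨sum_eq_zero hind, prod_eq_one fun k hk => by rw [hind k hk, sub_zero]⟩

lemma sum_abs_sub_le_mul_one_sub_ind_iff {ι : Type*} [Fintype ι] {a a' : EuclideanSpace ℝ ι}
    {Δ : ℝ} (hΔ : ∑ k, |a k - a' k| ≤ Δ) (b : Bool) :
    ∑ k, |a k - a' k| ≤ Δ * (1 - ind b) ↔ (b = true → a = a') := by
  cases b
  · simpa [ind] using hΔ
  · simp only [ind, if_true, sub_self, mul_zero, forall_const]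
    constructor
    · intro h
      have hzero := (sum_eq_zero_iff_of_nonneg fun k _ => abs_nonneg (a k - a' k)).1
        (le_antisymm h (sum_nonneg fun k _ => abs_nonneg _))
      ext k
      exact sub_eq_zero.1 (abs_eq_zero.1 (hzero k (mem_univ k)))
    · rintro rfl
      simp

section BigM

variable {ι : Type*} [Fintype ι] [DecidableEq ι] {D : ι → ℝ} {M c m : ℝ} (s : ι)

lemma sum_max_zero_sub_bigM_eq (hD0 : ∀ j, 0 ≤ D j) (hDM : ∀ j, D j ≤ M)
    (hcm : (c = 0 ∧ m = 1) ∨ (1 ≤ c ∧ m = 0)) :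
    ∑ j, max 0 (D j - M * (1 - (if s = j then 1 else 0) + c)) = D s * m := by
  rcases hcm with ⟨rfl, rfl⟩ | ⟨hc, rfl⟩
  · rw [mul_one, sum_eq_single s]
    · simpa using hD0 s
    · intro j _ hj
      simpa [Ne.symm hj] using hDM j
    · simp
  · rw [mul_zero]
    refine sum_eq_zero fun j _ => max_eq_left ?_
    have hM : 0 ≤ M := (hD0 j).trans (hDM j)
    have hslack : 1 ≤ 1 - (if s = j then 1 else 0) + c := by split <;> linarith
    nlinarith [hDM j]

lemma mul_le_sum_of_sub_bigM_le {dd : ι → ℝ}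
    (hdd : ∀ j, 0 ≤ dd j ∧ D j - M * (1 - (if s = j then 1 else 0) + c) ≤ dd j)
    (hcm : (c = 0 ∧ m = 1) ∨ (1 ≤ c ∧ m = 0)) :
    D s * m ≤ ∑ j, dd j := by
  rcases hcm with ⟨rfl, rfl⟩ | ⟨-, rfl⟩
  · calc D s * 1 ≤ dd s := by simpa using (hdd s).2
      _ ≤ ∑ j, dd j := single_le_sum (fun j _ => (hdd j).1) (mem_univ s)
  · simpa using sum_nonneg fun j _ => (hdd j).1

end BigM

theorem collocation_misoco_reformulation_general
    (d n p : ℕ)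
    (P : Fin n → Set (EuclideanSpace ℝ (Fin d)))
    (X : Set (EuclideanSpace ℝ (Fin d)))
    (Δ₁ : Fin n → ℝ)
    (hΔ₁ : ∀ i, ∀ a ∈ P i, ∀ x ∈ X, ‖a - x‖ ≤ Δ₁ i)
    (Δ₂ : Fin n → Fin n → ℝ)
    (hΔ₂ : ∀ i i', ∀ a ∈ P i, ∀ a' ∈ P i', ∑ k, |a k - a' k| ≤ Δ₂ i i') :
    sInf {v : ℝ |
        ∃ (a : Fin n → EuclideanSpace ℝ (Fin d))
          (x : Fin p → EuclideanSpace ℝ (Fin d))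
          (σ : Fin n → Fin p) (z : Fin n → Fin n → Bool),
          (∀ i, a i ∈ P i) ∧ (∀ j, x j ∈ X) ∧
          (∀ i i' : Fin n, i' < i → z i i' = true → a i = a i') ∧
          v = ∑ i, ‖a i - x (σ i)‖ * ∏ i' ∈ Finset.Iio i, (1 - ind (z i i'))} =
      sInf {v : ℝ |
        ∃ (a : Fin n → EuclideanSpace ℝ (Fin d))
          (x : Fin p → EuclideanSpace ℝ (Fin d))
          (σ : Fin n → Fin p) (z : Fin n → Fin n → Bool)
          (dd : Fin n → Fin p → ℝ),
          (∀ i, a i ∈ P i) ∧ (∀ j, x j ∈ X) ∧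
          (∀ i j, 0 ≤ dd i j ∧
            ‖a i - x j‖ -
                Δ₁ i * (1 - (if σ i = j then (1 : ℝ) else 0) +
                  ∑ i' ∈ Finset.Iio i, ind (z i i')) ≤ dd i j) ∧
          (∀ i i' : Fin n, i' < i →
            ∑ k, |a i k - a i' k| ≤ Δ₂ i i' * (1 - ind (z i i'))) ∧
          v = ∑ i, ∑ j, dd i j} := by
  refine csInf_eq_csInf_of_forall_exists_le ?_ ?_
  · rintro v ⟨a, x, σ, z, ha, hx, hz, rfl⟩
    refine ⟨_, ⟨a, x, σ, z, fun i j => max 0 (‖a i - x j‖ -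
        Δ₁ i * (1 - (if σ i = j then (1 : ℝ) else 0) + ∑ i' ∈ Iio i, ind (z i i'))),
      ha, hx, fun i j => ⟨le_max_left _ _, le_max_right _ _⟩,
      fun i i' hi => (sum_abs_sub_le_mul_one_sub_ind_iff
        (hΔ₂ i i' _ (ha i) _ (ha i')) _).2 (hz i i' hi), rfl⟩, le_of_eq ?_⟩
    exact sum_congr rfl fun i _ => sum_max_zero_sub_bigM_eq (σ i) (fun j => norm_nonneg _)
      (fun j => hΔ₁ i _ (ha i) _ (hx j)) (sum_ind_and_prod_one_sub_ind_cases _ _)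
  · rintro v ⟨a, x, σ, z, dd, ha, hx, hdd, hcol, rfl⟩
    refine ⟨_, ⟨a, x, σ, z, ha, hx, fun i i' hi => (sum_abs_sub_le_mul_one_sub_ind_iff
        (hΔ₂ i i' _ (ha i) _ (ha i')) _).1 (hcol i i' hi), rfl⟩, ?_⟩
    exact sum_le_sum fun i _ => mul_le_sum_of_sub_bigM_le (σ i) (hdd i)
      (sum_ind_and_prod_one_sub_ind_cases _ _)

/-- The collocation regional continuous location problem (with the product
objective charging each collocated group only once) has the same optimal value
as its big-M mixed-integer second-order-cone reformulation with auxiliary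
distance variables `dd`. -/
theorem collocation_misoco_reformulation
    (d n p : ℕ) (hd : 1 ≤ d) (hn : 1 ≤ n) (hp : 1 ≤ p)
    (P : Fin n → Set (EuclideanSpace ℝ (Fin d)))
    (hPne : ∀ i, (P i).Nonempty)
    (X : Set (EuclideanSpace ℝ (Fin d))) (hXne : X.Nonempty)
    (Δ₁ : Fin n → ℝ)
    (hΔ₁ : ∀ i, ∀ a ∈ P i, ∀ x ∈ X, ‖a - x‖ ≤ Δ₁ i)
    (Δ₂ : Fin n → Fin n → ℝ)
    (hΔ₂ : ∀ i i', ∀ a ∈ P i, ∀ a' ∈ P i', ∑ k, |a k - a' k| ≤ Δ₂ i i') :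
    sInf {v : ℝ |
        ∃ (a : Fin n → EuclideanSpace ℝ (Fin d))
          (x : Fin p → EuclideanSpace ℝ (Fin d))
          (σ : Fin n → Fin p) (z : Fin n → Fin n → Bool),
          (∀ i, a i ∈ P i) ∧ (∀ j, x j ∈ X) ∧
          (∀ i i' : Fin n, i' < i → z i i' = true → a i = a i') ∧
          v = ∑ i, ‖a i - x (σ i)‖ * ∏ i' ∈ Finset.Iio i, (1 - ind (z i i'))} =
      sInf {v : ℝ |
        ∃ (a : Fin n → EuclideanSpace ℝ (Fin d))
          (x : Fin p → EuclideanSpace ℝ (Fin d))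
          (σ : Fin n → Fin p) (z : Fin n → Fin n → Bool)
          (dd : Fin n → Fin p → ℝ),
          (∀ i, a i ∈ P i) ∧ (∀ j, x j ∈ X) ∧
          (∀ i j, 0 ≤ dd i j ∧
            ‖a i - x j‖ -
                Δ₁ i * (1 - (if σ i = j then (1 : ℝ) else 0) +
                  ∑ i' ∈ Finset.Iio i, ind (z i i')) ≤ dd i j) ∧
          (∀ i i' : Fin n, i' < i →
            ∑ k, |a i k - a i' k| ≤ Δ₂ i i' * (1 - ind (z i i'))) ∧
          v = ∑ i, ∑ j, dd i j} :=
  collocation_misoco_reformulation_general d n p P X Δ₁ hΔ₁ Δ₂ hΔ₂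
end
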